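/- Let G be an M-graph and let v be a non-real vertex of G. Then there exists a real vertex w of G such that the divisor v + v̄ is linearly equivalent to 2w on G. -/

import Mathlib

/-- A finite graph: finite sets of vertices and edges, and an incidence map
assigning to each edge the (unordered) pair of its ends (loops and multiple
edges are allowed). -/
structure FinGraph where
  V : Type
  E : Type
  [decV : DecidableEq V]
  [fintV : Fintype V]
  [fintE : Fintype E]
  ψ : E → Sym2 V

attribute [instance] FinGraph.decV FinGraph.fintV FinGraph.fintE

namespace FinGraph

variable (G : FinGraph)

/-- Two vertices are adjacent if some edge has exactly them as its ends. -/
def Adj (v w : G.V) : Prop := ∃ e : G.E, G.ψ e = s(v, w)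

/-- A graph is connected if it is nonempty and any two vertices are joined by a
walk (equivalently, related by the reflexive-transitive closure of adjacency). -/
def Connected : Prop := Nonempty G.V ∧ ∀ v w : G.V, Relation.ReflTransGen G.Adj v w

/-- The number of connected components. -/
noncomputable def numComponents : ℕ :=
  Nat.card (Quotient (Relation.EqvGen.setoid G.Adj))

/-- The genus `g(G) = c(G) + e(G) - v(G)`. -/
noncomputable def genus : ℤ :=
  (numComponents G : ℤ) + (Fintype.card G.E : ℤ) - (Fintype.card G.V : ℤ)

/-- A real structure on a finite graph: involutions on vertices and edges
compatible with the incidence map. -/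
structure RealStructure (G : FinGraph) where
  ιV : G.V → G.V
  ιE : G.E → G.E
  ιV_invol : ∀ v, ιV (ιV v) = v
  ιE_invol : ∀ e, ιE (ιE e) = e
  compat : ∀ e, G.ψ (ιE e) = (G.ψ e).map ιV

variable {G} (σ : RealStructure G)

/-- A vertex is real if it is fixed by the involution. -/
def RealV (v : G.V) : Prop := σ.ιV v = v

/-- An edge is real if it is fixed by the involution. -/
def RealE (e : G.E) : Prop := σ.ιE e = e

/-- A real edge is isolated if some end of it is not a real vertex. -/
def IsolatedRealE (e : G.E) : Prop := RealE σ e ∧ ∃ v ∈ G.ψ e, ¬ RealV σ v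

/-- A non-isolated real edge: a real edge all of whose ends are real vertices. -/
def NonIsolatedRealE (e : G.E) : Prop := RealE σ e ∧ ∀ v ∈ G.ψ e, RealV σ v

/-- The vertex set of the real locus graph `G(ℝ)`: the real vertices. -/
def RV := {v : G.V // RealV σ v}

/-- Adjacency in the real locus graph `G(ℝ)`: via non-isolated real edges. -/
def adjR (v w : RV σ) : Prop :=
  ∃ e : G.E, NonIsolatedRealE σ e ∧ G.ψ e = s(v.1, w.1)

/-- The connected components of the real locus graph `G(ℝ)`. -/
def CompR := Quotient (Relation.EqvGen.setoid (adjR σ))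

/-- The genus of a connected component of `G(ℝ)`:
`1 + (number of its edges) - (number of its vertices)`. -/
noncomputable def compGenus (c : CompR σ) : ℤ :=
  1 + (Nat.card {e : G.E // NonIsolatedRealE σ e ∧
        ∃ v : RV σ, v.1 ∈ G.ψ e ∧ Quotient.mk (Relation.EqvGen.setoid (adjR σ)) v = c} : ℤ)
    - (Nat.card {v : RV σ // Quotient.mk (Relation.EqvGen.setoid (adjR σ)) v = c} : ℤ)

/-- The number `s(G) = e^i(G) + Σ_i (g(G(ℝ)_i) + 1)`. -/
noncomputable def sNum : ℤ :=
  (Nat.card {e : G.E // IsolatedRealE σ e} : ℤ) + ∑ᶠ c : CompR σ, (compGenus σ c + 1)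

/-- One step of a walk containing no real vertex and no real edge. -/
def nonRealAdj (v w : G.V) : Prop :=
  ¬ RealV σ v ∧ ¬ RealV σ w ∧ ∃ e : G.E, ¬ RealE σ e ∧ G.ψ e = s(v, w)

/-- `a(G) = 1` iff there is a non-real vertex `v` and a walk from `v` to `v̄`
containing no real vertex and no real edge. -/
def aProp : Prop :=
  ∃ v : G.V, ¬ RealV σ v ∧ Relation.ReflTransGen (nonRealAdj σ) v (σ.ιV v)

/-- `a(G)` as a number. -/
noncomputable def aNum : ℕ := @ite _ (aProp σ) (Classical.dec _) 1 0

/-- The degree of a divisor (a divisor on `G` is a function `G.V → ℤ`). -/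
def deg (D : G.V → ℤ) : ℤ := ∑ v, D v

/-- A divisor is effective if all its coefficients are nonnegative. -/
def Eff (D : G.V → ℤ) : Prop := ∀ v, 0 ≤ D v

variable (G)

/-- The contribution of the edge `e` to the principal divisor `Δ(f)`. -/
def edgeLap (f : G.V → ℤ) (e : G.E) : G.V → ℤ :=
  Sym2.lift ⟨fun a b v => (if v = a then f b - f a else 0) + (if v = b then f a - f b else 0),
    fun a b => funext fun v => add_comm _ _⟩ (G.ψ e)

/-- The principal divisor `Δ(f)(v) = Σ_{e, ψ(e) = {v,w}} (f(w) - f(v))`. -/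
def Lap (f : G.V → ℤ) : G.V → ℤ := fun v => ∑ e, edgeLap G f e v

/-- Two divisors are linearly equivalent if their difference is principal. -/
def LinEquiv (D₁ D₂ : G.V → ℤ) : Prop := ∃ f : G.V → ℤ, D₂ = D₁ + Lap G f

variable {G}

/-- The conjugate divisor `D̄(v) = D(v̄)`. -/
def conjDiv (D : G.V → ℤ) : G.V → ℤ := fun v => D (σ.ιV v)

/-- A divisor is real if it equals its conjugate. -/
def IsRealDiv (D : G.V → ℤ) : Prop := conjDiv σ D = D

variable (G)

/-- The divisor consisting of the single vertex `v`. -/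
def unitDiv (v : G.V) : G.V → ℤ := fun w => if w = v then 1 else 0

/-- `RankGE G D r` : every effective divisor `E` of degree `r` is dominated by
some effective divisor `D'` linearly equivalent to `D`.  The rank `rk(D)` is
the greatest `r` with this property (note it holds vacuously for `r < 0`, so
the greatest such `r` is `-1` exactly when `|D| = ∅`). -/
def RankGE (D : G.V → ℤ) (r : ℤ) : Prop :=
  ∀ E : G.V → ℤ, Eff E → deg E = r →
    ∃ D' : G.V → ℤ, LinEquiv G D D' ∧ Eff D' ∧ Eff (D' - E)

/-- `r` is the rank of `D`: it is the greatest element of `{r | RankGE G D r}`. -/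
def HasRank (D : G.V → ℤ) (r : ℤ) : Prop := IsGreatest {r' : ℤ | RankGE G D r'} r

variable {G}

/-- The real analogue of `RankGE`, using real effective divisors only. -/
def RealRankGE (D : G.V → ℤ) (r : ℤ) : Prop :=
  ∀ E : G.V → ℤ, Eff E → IsRealDiv σ E → deg E = r →
    ∃ D' : G.V → ℤ, LinEquiv G D D' ∧ Eff D' ∧ IsRealDiv σ D' ∧ Eff (D' - E)

/-- `r` is the real rank of `D`. -/
def HasRealRank (D : G.V → ℤ) (r : ℤ) : Prop :=
  IsGreatest {r' : ℤ | RealRankGE σ D r'} r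

/-- An M-graph: a connected graph with a real structure, no isolated real
edges, and `s(G) = g(G) + 1`. -/
def IsMGraph : Prop :=
  G.Connected ∧ (∀ e : G.E, ¬ IsolatedRealE σ e) ∧ sNum σ = G.genus + 1

/-- A strong M-graph: an M-graph such that `G(ℝ)` has `g(G) + 1` connected
components. -/
def IsStrongMGraph : Prop :=
  IsMGraph σ ∧ (Nat.card (CompR σ) : ℤ) = G.genus + 1

/-- The degree of the restriction of a divisor to the connected component `c`
of the real locus graph `G(ℝ)`. -/
noncomputable def degOn (c : CompR σ) (D : G.V → ℤ) : ℤ :=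
  ∑ᶠ (v : {v : RV σ // Quotient.mk (Relation.EqvGen.setoid (adjR σ)) v = c}), D v.1.1

/-- The valence of a vertex: the number of edges incident to it. -/
noncomputable def valence (v : G.V) : ℤ := (Nat.card {e : G.E // v ∈ G.ψ e} : ℤ)

/-- The canonical divisor `K_G = Σ_v (val(v) - 2) v`. -/
noncomputable def canonicalDiv : G.V → ℤ := fun v => valence v - 2

end FinGraph

/-!
Contract every real edge of `G` and identify every non-real vertex with its conjugate. The
result is a graph `T` whose vertices are the components of `G(ℝ)` and the conjugate pairs of
non-real vertices, and whose edges are the conjugate pairs of non-real edges. Counting shows that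
for a connected graph without isolated real edges `s(G) = g(G) + 1` says exactly
`e(T) + 1 = v(T)`, so `T` is a tree and each of its edges is a bridge. Firing the side of such a
bridge that contains `{u, ū}` moves the divisor `u + ū` across the two conjugate edges above it,
to `c + c̄`. Walking in `T` from `{v, v̄}` to a component of `G(ℝ)` (one exists since
`g(G) ≥ 0`) turns `v + v̄` into `w + w̄ = 2w` with `w` real.
-/

open Relation

namespace Function.Involutive

variable {α : Type*} {j : α → α} (hj : Involutive j)

def setoid : Setoid α where
  r a b := a = b ∨ a = j b
  iseqv := by
    refine ⟨fun a => Or.inl rfl, ?_, ?_⟩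
    · rintro a b (rfl | rfl)
      · exact Or.inl rfl
      · exact Or.inr (hj b).symm
    · rintro a b c (rfl | rfl) (rfl | rfl)
      · exact Or.inl rfl
      · exact Or.inr rfl
      · exact Or.inr rfl
      · exact Or.inl (hj c)

theorem card_eq_two_mul_card_quotient [Finite α] (hfree : ∀ a, j a ≠ a) :
    Nat.card α = 2 * Nat.card (Quotient hj.setoid) := by
  have := Fintype.ofFinite (Quotient hj.setoid)
  have hfiber (q : Quotient hj.setoid) : Nat.card {a // Quotient.mk _ a = q} = 2 := by
    induction q using Quotient.inductionOn with | h a =>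
    have hset : {x | Quotient.mk hj.setoid x = Quotient.mk _ a} = {a, j a} := by
      ext x
      exact Quotient.eq
    change Nat.card ({x | Quotient.mk hj.setoid x = Quotient.mk _ a} : Set α) = 2
    rw [Nat.card_coe_set_eq, hset, Set.ncard_pair (hfree a).symm]
  rw [Nat.card_congr (Equiv.sigmaFiberEquiv (Quotient.mk hj.setoid)).symm, Nat.card_sigma]
  simp [hfiber, mul_comm]

def restrictNonfixed (a : {a // j a ≠ a}) : {a // j a ≠ a} :=
  ⟨j a, fun h => a.2 (by rw [hj] at h; exact h.symm)⟩

theorem involutive_restrictNonfixed : Involutive hj.restrictNonfixed :=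
  fun a => Subtype.ext (hj a)

/-- The two-element orbits of `j`. -/
abbrev NonfixedOrbit : Type _ := Quotient hj.involutive_restrictNonfixed.setoid

theorem card_nonfixed_eq_two_mul [Finite α] :
    Nat.card {a // j a ≠ a} = 2 * Nat.card hj.NonfixedOrbit :=
  hj.involutive_restrictNonfixed.card_eq_two_mul_card_quotient fun a h =>
    a.2 (congrArg Subtype.val h)

end Function.Involutive

namespace FinGraph

variable {G : FinGraph}

theorem exists_ψ_eq (e : G.E) : ∃ x y, G.ψ e = s(x, y) :=
  Sym2.inductionOn (G.ψ e) fun x y => ⟨x, y, rfl⟩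

theorem Adj.symm {v w : G.V} : G.Adj v w → G.Adj w v
  | ⟨e, he⟩ => ⟨e, he.trans Sym2.eq_swap⟩

instance : Std.Symm G.Adj := ⟨fun _ _ => Adj.symm⟩

noncomputable abbrev deleteEdge (G : FinGraph) (ε : G.E) : FinGraph where
  V := G.V
  E := {e : G.E // e ≠ ε}
  fintE := Fintype.ofFinite _
  ψ e := G.ψ e.1

theorem Connected.numComponents_eq_one (hG : G.Connected) : G.numComponents = 1 := by
  obtain ⟨⟨v⟩, hconn⟩ := hG
  rw [numComponents, Nat.card_eq_one_iff_unique]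
  refine ⟨⟨fun a b => ?_⟩, ⟨Quotient.mk _ v⟩⟩
  induction a using Quotient.inductionOn with | h x =>
  induction b using Quotient.inductionOn with | h y =>
  exact Quotient.sound (EqvGen.reflTransGen_le_eqvGen _ _ _ (hconn x y))

theorem Connected.genus_eq (hG : G.Connected) :
    G.genus = 1 + Nat.card G.E - Nat.card G.V := by
  simp [genus, hG.numComponents_eq_one, Nat.card_eq_fintype_card]

theorem Connected.card_V_le_card_E_add_one (hG : G.Connected) :
    Nat.card G.V ≤ Nat.card G.E + 1 := by
  let H := SimpleGraph.fromRel G.Adj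
  have hH : H.Connected := by
    have := hG.1
    refine ⟨fun u w => (SimpleGraph.reachable_iff_reflTransGen u w).2 ?_⟩
    refine reflTransGen_closed (fun a b hab => ?_) _ _ (hG.2 u w)
    by_cases hne : a = b
    · exact hne ▸ .refl
    · exact .single ((SimpleGraph.fromRel_adj _ _ _).2 ⟨hne, Or.inl hab⟩)
  have hcover (z : H.edgeSet) : ∃ e, G.ψ e = z := by
    obtain ⟨z, hz⟩ := z
    induction z using Sym2.ind with | h x y =>
    obtain ⟨-, ⟨e, he⟩ | ⟨e, he⟩⟩ := (SimpleGraph.fromRel_adj _ _ _).1 hz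
    exacts [⟨e, he⟩, ⟨e, he.trans Sym2.eq_swap⟩]
  choose g hg using hcover
  have hg_inj : g.Injective := fun z z' h => Subtype.ext ((hg z).symm.trans (h ▸ hg z'))
  exact hH.card_vert_le_card_edgeSet_add_one.trans
    (Nat.add_le_add_right (Nat.card_le_card_of_injective g hg_inj) 1)

theorem Connected.not_reflTransGen_deleteEdge_adj (hG : G.Connected)
    (hcard : Nat.card G.E + 1 = Nat.card G.V) {ε : G.E} {t t' : G.V}
    (hε : G.ψ ε = s(t, t')) : ¬ ReflTransGen (G.deleteEdge ε).Adj t t' := by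
  intro hpath
  have hconn : (G.deleteEdge ε).Connected := by
    refine ⟨hG.1, fun u w => reflTransGen_closed (fun a b ⟨e, he⟩ => ?_) _ _ (hG.2 u w)⟩
    by_cases heε : e = ε
    · subst heε
      rcases Sym2.eq_iff.1 (hε.symm.trans he) with ⟨rfl, rfl⟩ | ⟨rfl, rfl⟩
      · exact hpath
      · exact symm hpath
    · exact .single ⟨⟨e, heε⟩, he⟩
  have hE : Nat.card (G.deleteEdge ε).E + 1 = Nat.card G.E := by
    classical
    rw [← Nat.card_congr (Equiv.optionSubtypeNe ε), Finite.card_option]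
  have := hconn.card_V_le_card_E_add_one
  change Nat.card G.V ≤ _ at this
  omega

theorem edgeLap_eq_smul {f : G.V → ℤ} {e : G.E} {x y : G.V} (h : G.ψ e = s(x, y)) :
    edgeLap G f e = (f y - f x) • (unitDiv G x - unitDiv G y) := by
  funext v
  simp only [edgeLap, h, Sym2.lift_mk, unitDiv, Pi.smul_apply, Pi.sub_apply, smul_eq_mul]
  split_ifs <;> simp_all

theorem Lap_add (f g : G.V → ℤ) : Lap G (f + g) = Lap G f + Lap G g := by
  funext v
  simp only [Lap, Pi.add_apply, ← Finset.sum_add_distrib]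
  refine Finset.sum_congr rfl fun e _ => ?_
  obtain ⟨x, y, h⟩ := exists_ψ_eq e
  simp only [edgeLap_eq_smul h, Pi.add_apply, Pi.smul_apply, smul_eq_mul]
  ring

theorem LinEquiv.trans {D₁ D₂ D₃ : G.V → ℤ} (h₁₂ : LinEquiv G D₁ D₂)
    (h₂₃ : LinEquiv G D₂ D₃) : LinEquiv G D₁ D₃ := by
  obtain ⟨f, rfl⟩ := h₁₂
  obtain ⟨g, rfl⟩ := h₂₃
  exact ⟨f + g, by rw [Lap_add, add_assoc]⟩

/-- Firing `S`, whose only outgoing edges are `e₁` and `e₂`. -/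
theorem linEquiv_of_cut (S : Set G.V) {e₁ e₂ : G.E} (hne : e₁ ≠ e₂) {a a' c c' : G.V}
    (h₁ : G.ψ e₁ = s(a, c)) (h₂ : G.ψ e₂ = s(a', c')) (ha : a ∈ S) (ha' : a' ∈ S)
    (hc : c ∉ S) (hc' : c' ∉ S)
    (hS : ∀ e, e ≠ e₁ → e ≠ e₂ → ∀ x y, G.ψ e = s(x, y) → (x ∈ S ↔ y ∈ S)) :
    LinEquiv G (unitDiv G a + unitDiv G a') (unitDiv G c + unitDiv G c') := by
  classical
  let f := S.indicator (1 : G.V → ℤ)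
  have hLap : Lap G f = edgeLap G f e₁ + edgeLap G f e₂ := by
    funext v
    rw [Pi.add_apply, ← Finset.sum_pair hne (f := fun e => edgeLap G f e v)]
    refine (Finset.sum_subset (Finset.subset_univ _) fun e _ he => ?_).symm
    simp only [Finset.mem_insert, Finset.mem_singleton, not_or] at he
    obtain ⟨x, y, h⟩ := exists_ψ_eq e
    have hxy : f x = f y := by
      by_cases hx : x ∈ S
      · simp [f, hx, (hS e he.1 he.2 x y h).1 hx]
      · simp [f, hx, mt (hS e he.1 he.2 x y h).2 hx]
    simp [edgeLap_eq_smul h, hxy]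
  refine ⟨f, ?_⟩
  rw [hLap, edgeLap_eq_smul h₁, edgeLap_eq_smul h₂]
  simp only [f, Set.indicator_of_mem ha, Set.indicator_of_mem ha', Set.indicator_of_notMem hc,
    Set.indicator_of_notMem hc', Pi.one_apply]
  funext v
  simp only [Pi.add_apply, Pi.smul_apply, Pi.sub_apply, smul_eq_mul]
  ring

variable (σ : RealStructure G)

instance : DecidablePred (RealV σ) := fun v => inferInstanceAs (Decidable (σ.ιV v = v))

instance : Finite (RV σ) := Subtype.finite

noncomputable instance : Fintype (CompR σ) := by
  unfold CompR
  exact Fintype.ofFinite _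

theorem RealStructure.involutive_ιV : Function.Involutive σ.ιV := σ.ιV_invol

theorem RealStructure.involutive_ιE : Function.Involutive σ.ιE := σ.ιE_invol

abbrev PairV : Type := σ.involutive_ιV.NonfixedOrbit

abbrev PairE : Type := σ.involutive_ιE.NonfixedOrbit

def proj (v : G.V) : CompR σ ⊕ PairV σ :=
  if h : RealV σ v then .inl (Quotient.mk _ ⟨v, h⟩) else .inr (Quotient.mk _ ⟨v, h⟩)

variable {σ}

theorem not_realV_ιV {v : G.V} (hv : ¬ RealV σ v) : ¬ RealV σ (σ.ιV v) :=
  fun h => hv (σ.involutive_ιV.injective h)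

theorem proj_of_realV {v : G.V} (hv : RealV σ v) :
    proj σ v = .inl (Quotient.mk _ ⟨v, hv⟩) :=
  dif_pos hv

theorem proj_of_not_realV {v : G.V} (hv : ¬ RealV σ v) :
    proj σ v = .inr (Quotient.mk _ ⟨v, hv⟩) :=
  dif_neg hv

theorem proj_ιV (v : G.V) : proj σ (σ.ιV v) = proj σ v := by
  by_cases hv : RealV σ v
  · rw [hv]
  · rw [proj_of_not_realV hv, proj_of_not_realV (not_realV_ιV hv)]
    exact congrArg Sum.inr (Quotient.sound (Or.inr rfl))

theorem proj_eq_proj_iff {u x : G.V} (hu : ¬ RealV σ u) :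
    proj σ x = proj σ u ↔ x = u ∨ x = σ.ιV u := by
  refine ⟨fun h => ?_, ?_⟩
  · by_cases hx : RealV σ x
    · rw [proj_of_realV hx, proj_of_not_realV hu] at h
      exact absurd h Sum.inl_ne_inr
    · rw [proj_of_not_realV hx, proj_of_not_realV hu] at h
      rcases Quotient.exact (Sum.inr_injective h) with h | h
      exacts [.inl (congrArg Subtype.val h), .inr (congrArg Subtype.val h)]
  · rintro (rfl | rfl)
    exacts [rfl, proj_ιV u]

theorem proj_eq_of_realE {e : G.E} (he : RealE σ e) {x y : G.V} (hxy : G.ψ e = s(x, y)) :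
    proj σ x = proj σ y := by
  have hconj := σ.compat e
  rw [he, hxy, Sym2.map_mk, Sym2.eq_iff] at hconj
  rcases hconj with ⟨hx, hy⟩ | ⟨hx, -⟩
  · have hreal : NonIsolatedRealE σ e := ⟨he, fun v hv => by
      rw [hxy, Sym2.mem_iff] at hv
      rcases hv with rfl | rfl
      exacts [hx.symm, hy.symm]⟩
    rw [proj_of_realV hx.symm, proj_of_realV hy.symm]
    exact congrArg Sum.inl (Quotient.sound (EqvGen.rel _ _ ⟨e, hreal, hxy⟩))
  · rw [hx, proj_ιV]

theorem proj_surjective : Function.Surjective (proj σ) := by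
  rintro (c | p)
  · induction c using Quotient.inductionOn with | h v => exact ⟨v.1, proj_of_realV v.2⟩
  · induction p using Quotient.inductionOn with | h v => exact ⟨v.1, proj_of_not_realV v.2⟩

variable (σ)

def quotψ : PairE σ → Sym2 (CompR σ ⊕ PairV σ) :=
  Quotient.lift (fun e => (G.ψ e.1).map (proj σ)) (by
    rintro e _ (rfl | rfl)
    · rfl
    · change (G.ψ (σ.ιE _)).map _ = _
      rw [σ.compat, Sym2.map_map]
      congr 1
      exact funext proj_ιV)

noncomputable def quotGraph : FinGraph where
  V := CompR σ ⊕ PairV σ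
  E := PairE σ
  decV := Classical.decEq _
  fintV := Fintype.ofFinite _
  fintE := Fintype.ofFinite _
  ψ := quotψ σ

variable {σ}

theorem proj_eq_or_quotGraph_ψ_eq {e : G.E} {x y : G.V} (hxy : G.ψ e = s(x, y)) :
    proj σ x = proj σ y ∨
      ∃ he : ¬ RealE σ e, (quotGraph σ).ψ (Quotient.mk _ ⟨e, he⟩) = s(proj σ x, proj σ y) := by
  by_cases he : RealE σ e
  · exact .inl (proj_eq_of_realE he hxy)
  · exact .inr ⟨he, by simp [quotGraph, quotψ, hxy]⟩

theorem Connected.quotGraph_connected (hG : G.Connected) : (quotGraph σ).Connected := by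
  obtain ⟨⟨v⟩, hconn⟩ := hG
  refine ⟨⟨proj σ v⟩, fun t t' => ?_⟩
  obtain ⟨u, rfl⟩ := proj_surjective t
  obtain ⟨w, rfl⟩ := proj_surjective t'
  refine ReflTransGen.lift' (proj σ) (fun a b ⟨e, hab⟩ => ?_) _ _ (hconn u w)
  change ReflTransGen _ (proj σ a) (proj σ b)
  rcases proj_eq_or_quotGraph_ψ_eq (σ := σ) hab with h | ⟨_, h⟩
  · exact h ▸ .refl
  · exact .single ⟨_, h⟩

theorem reflTransGen_deleteEdge_proj_iff {ε : PairE σ} {t : (quotGraph σ).V} {e : G.E}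
    (he : ∀ h : ¬ RealE σ e, Quotient.mk _ ⟨e, h⟩ ≠ ε) {x y : G.V} (hxy : G.ψ e = s(x, y)) :
    ReflTransGen ((quotGraph σ).deleteEdge ε).Adj t (proj σ x) ↔
      ReflTransGen ((quotGraph σ).deleteEdge ε).Adj t (proj σ y) := by
  rcases proj_eq_or_quotGraph_ψ_eq (σ := σ) hxy with h | ⟨he', h⟩
  · rw [h]
  · have hadj : ((quotGraph σ).deleteEdge ε).Adj (proj σ x) (proj σ y) :=
      ⟨⟨Quotient.mk _ ⟨e, he'⟩, he he'⟩, h⟩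
    exact ⟨fun hx => hx.tail hadj, fun hy => hy.tail hadj.symm⟩

variable (σ) in
theorem sum_card_compEdges :
    ∑ c : CompR σ, Nat.card {e : G.E // NonIsolatedRealE σ e ∧
        ∃ v : RV σ, v.1 ∈ G.ψ e ∧ Quotient.mk (EqvGen.setoid (adjR σ)) v = c}
      = Nat.card {e : G.E // NonIsolatedRealE σ e} := by
  have hcomp {e : G.E} (he : NonIsolatedRealE σ e) {v w : RV σ} (hv : v.1 ∈ G.ψ e)
      (hw : w.1 ∈ G.ψ e) :
      Quotient.mk (EqvGen.setoid (adjR σ)) v = Quotient.mk _ w := by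
    by_cases hvw : v.1 = w.1
    · rw [Subtype.ext hvw]
    · exact Quotient.sound (EqvGen.rel _ _ ⟨e, he, (Sym2.mem_and_mem_iff hvw).1 ⟨hv, hw⟩⟩)
  let comp (e : {e : G.E // NonIsolatedRealE σ e}) : CompR σ :=
    Quotient.mk _ ⟨(G.ψ e.1).out.1, e.2.2 _ (Sym2.out_fst_mem _)⟩
  have hfiber (c : CompR σ) : Nat.card {e : G.E // NonIsolatedRealE σ e ∧
      ∃ v : RV σ, v.1 ∈ G.ψ e ∧ Quotient.mk (EqvGen.setoid (adjR σ)) v = c}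
      = Nat.card {e // comp e = c} :=
    Nat.card_congr ((Equiv.subtypeSubtypeEquivSubtypeInter _ _).symm.trans
      (Equiv.subtypeEquivRight fun e =>
        ⟨fun ⟨_, hv, hvc⟩ => (hcomp e.2 (Sym2.out_fst_mem _) hv).trans hvc,
          fun h => ⟨_, Sym2.out_fst_mem _, h⟩⟩))
  rw [Nat.card_congr (Equiv.sigmaFiberEquiv comp).symm, Nat.card_sigma]
  exact Finset.sum_congr rfl fun c _ => hfiber c

variable (σ) in
theorem sNum_eq :
    sNum σ = Nat.card {e // IsolatedRealE σ e} + 2 * Nat.card (CompR σ)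
      + Nat.card {e // NonIsolatedRealE σ e} - Nat.card (RV σ) := by
  have hV : Nat.card (RV σ) =
      ∑ c : CompR σ, Nat.card {v : RV σ // Quotient.mk (EqvGen.setoid (adjR σ)) v = c} := by
    let comp : RV σ → CompR σ := Quotient.mk _
    rw [Nat.card_congr (Equiv.sigmaFiberEquiv comp).symm, Nat.card_sigma]
    rfl
  rw [sNum, finsum_eq_sum_of_fintype, hV, ← sum_card_compEdges σ]
  simp only [compGenus, Nat.cast_sum, Finset.sum_add_distrib, Finset.sum_sub_distrib,
    Finset.sum_const, Finset.card_univ, Nat.card_eq_fintype_card]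
  ring

theorem IsMGraph.card_quotGraph_E_add_one (hM : IsMGraph σ) :
    Nat.card (quotGraph σ).E + 1 = Nat.card (quotGraph σ).V := by
  classical
  obtain ⟨hG, hiso, hs⟩ := hM
  have hreal : {e // RealE σ e} ≃ {e // NonIsolatedRealE σ e} :=
    Equiv.subtypeEquivRight fun e =>
      ⟨fun he => ⟨he, fun v hv => by_contra fun h => hiso e ⟨he, v, hv, h⟩⟩, And.left⟩
  have hV : Nat.card G.V = Nat.card (RV σ) + 2 * Nat.card (PairV σ) := by
    rw [← σ.involutive_ιV.card_nonfixed_eq_two_mul, ← Nat.card_sum]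
    exact Nat.card_congr (Equiv.sumCompl (RealV σ)).symm
  have hE : Nat.card G.E = Nat.card {e // NonIsolatedRealE σ e} + 2 * Nat.card (PairE σ) := by
    rw [← σ.involutive_ιE.card_nonfixed_eq_two_mul, ← Nat.card_congr hreal, ← Nat.card_sum]
    exact Nat.card_congr (Equiv.sumCompl (RealE σ)).symm
  have hI : Nat.card {e // IsolatedRealE σ e} = 0 :=
    Nat.card_eq_zero.2 (.inl ⟨fun e => hiso e.1 e.2⟩)
  rw [sNum_eq, hG.genus_eq, hI, hV, hE] at hs
  change Nat.card (PairE σ) + 1 = Nat.card (CompR σ ⊕ PairV σ)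
  rw [Nat.card_sum]
  omega

theorem IsMGraph.exists_realV (hM : IsMGraph σ) : ∃ w, RealV σ w := by
  by_contra! hno
  obtain ⟨hG, hiso, hs⟩ := hM
  have : IsEmpty (CompR σ) := ⟨fun c => Quotient.inductionOn c fun v => hno v.1 v.2⟩
  have : IsEmpty {e // IsolatedRealE σ e} := ⟨fun e => hiso e.1 e.2⟩
  rw [sNum, finsum_of_isEmpty, Nat.card_of_isEmpty, hG.genus_eq] at hs
  have := hG.card_V_le_card_E_add_one
  omega

theorem IsMGraph.exists_linEquiv_of_quotGraph_adj (hM : IsMGraph σ) {u : G.V}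
    (hu : ¬ RealV σ u) {t : (quotGraph σ).V} (hadj : (quotGraph σ).Adj (proj σ u) t) :
    ∃ c, proj σ c = t ∧
      LinEquiv G (unitDiv G u + unitDiv G (σ.ιV u)) (unitDiv G c + unitDiv G (σ.ιV c)) := by
  obtain ⟨ε, hε⟩ := hadj
  have hbridge := hM.1.quotGraph_connected.not_reflTransGen_deleteEdge_adj
    hM.card_quotGraph_E_add_one hε
  obtain ⟨e, rfl⟩ := Quotient.exists_rep ε
  obtain ⟨a, c, hac, ha, hc⟩ :
      ∃ a c, G.ψ e.1 = s(a, c) ∧ proj σ a = proj σ u ∧ proj σ c = t := by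
    obtain ⟨x, y, hxy⟩ := exists_ψ_eq e.1
    have hε' : s(proj σ x, proj σ y) = s(proj σ u, t) := by
      simpa [quotGraph, quotψ, hxy] using hε
    rcases Sym2.eq_iff.1 hε' with ⟨hx, hy⟩ | ⟨hx, hy⟩
    exacts [⟨x, y, hxy, hx, hy⟩, ⟨y, x, hxy.trans Sym2.eq_swap, hy, hx⟩]
  let S : Set G.V :=
    {z | ReflTransGen ((quotGraph σ).deleteEdge ⟦e⟧).Adj (proj σ u) (proj σ z)}
  have hS : ∀ e', e' ≠ e.1 → e' ≠ σ.ιE e.1 → ∀ p q, G.ψ e' = s(p, q) → (p ∈ S ↔ q ∈ S) :=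
    fun e' h₁ h₂ _ _ hpq => reflTransGen_deleteEdge_proj_iff (fun he' h => by
      rcases Quotient.exact h with h | h
      exacts [h₁ (congrArg Subtype.val h), h₂ (congrArg Subtype.val h)]) hpq
  have hpair : unitDiv G a + unitDiv G (σ.ιV a) = unitDiv G u + unitDiv G (σ.ιV u) := by
    rcases (proj_eq_proj_iff hu).1 ha with rfl | rfl
    · rfl
    · rw [σ.ιV_invol, add_comm]
  refine ⟨c, hc, hpair ▸ linEquiv_of_cut S (Ne.symm e.2) hac
    (by rw [σ.compat, hac, Sym2.map_mk]) ?_ ?_ ?_ ?_ hS⟩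
  · exact show ReflTransGen _ _ (proj σ a) from ha ▸ .refl
  · exact show ReflTransGen _ _ (proj σ (σ.ιV a)) from (proj_ιV a).trans ha ▸ .refl
  · exact show ¬ ReflTransGen _ _ (proj σ c) from hc ▸ hbridge
  · exact show ¬ ReflTransGen _ _ (proj σ (σ.ιV c)) from (proj_ιV c).trans hc ▸ hbridge

theorem IsMGraph.exists_linEquiv_two_smul_of_reflTransGen (hM : IsMGraph σ) {w₀ u : G.V}
    (hw₀ : RealV σ w₀) (hu : ¬ RealV σ u)
    (hpath : ReflTransGen (quotGraph σ).Adj (proj σ u) (proj σ w₀)) :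
    ∃ w, RealV σ w ∧ LinEquiv G (unitDiv G u + unitDiv G (σ.ιV u)) ((2 : ℤ) • unitDiv G w) := by
  generalize ht : proj σ u = t at hpath
  induction hpath using ReflTransGen.head_induction_on generalizing u with
  | refl =>
    rcases (proj_eq_proj_iff hu).1 ht.symm with rfl | rfl
    exacts [absurd hw₀ hu, absurd hw₀ (not_realV_ιV hu)]
  | head hadj _ ih =>
    obtain ⟨c, rfl, huc⟩ := hM.exists_linEquiv_of_quotGraph_adj hu (ht ▸ hadj)
    by_cases hc : RealV σ c
    · refine ⟨c, hc, ?_⟩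
      rwa [hc, ← two_smul ℤ] at huc
    · obtain ⟨w, hw, hcw⟩ := ih hc rfl
      exact ⟨w, hw, huc.trans hcw⟩

end FinGraph

open FinGraph in
/-- On an M-graph, for every non-real vertex `v` there is a
real vertex `w` with `v + v̄ ∼ 2w`. -/
theorem mGraph_pair_equiv_two_real (G : FinGraph) (σ : RealStructure G)
    (hM : IsMGraph σ) (v : G.V) (hv : ¬ RealV σ v) :
    ∃ w : G.V, RealV σ w ∧
      LinEquiv G (unitDiv G v + unitDiv G (σ.ιV v)) ((2 : ℤ) • unitDiv G w) := by
  obtain ⟨w₀, hw₀⟩ := hM.exists_realV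
  exact hM.exists_linEquiv_two_smul_of_reflTransGen hw₀ hv (hM.1.quotGraph_connected.2 _ _)
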